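/- Let T be a binary r × c row-column design on v symbols that is equireplicate or near equireplicate, with 2 ≤ r, 2 ≤ c and max(r,c) ≤ v ≤ rc, and let e = rc/v. Then: (a) λ_rc = ⌊e⌋ + ⌈e⌉ − ⌊e⌋·⌈e⌉/e; (b) ⌊λ_rc⌋ = ⌊e⌋ and ⌈λ_rc⌉ = ⌈e⌉; (c) λ_rr = c(λ_rc − 1)/(r − 1); (d) λ_cc = r(λ_rc − 1)/(c − 1). -/
import Mathlib


open Finset

/-- An `r × c` row-column design on `v` symbols is binary if no symbol occurs
twice in any row or in any column. -/
def IsBinaryDesign {r c v : ℕ} (T : Fin r × Fin c → Fin v) : Prop :=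
  (∀ (i : Fin r) (j j' : Fin c), j ≠ j' → T (i, j) ≠ T (i, j')) ∧
  (∀ (j : Fin c) (i i' : Fin r), i ≠ i' → T (i, j) ≠ T (i', j))

/-- The replication number of a symbol `s`: the number of cells containing `s`. -/
def replNum {r c v : ℕ} (T : Fin r × Fin c → Fin v) (s : Fin v) : ℕ :=
  (Finset.univ.filter (fun p : Fin r × Fin c => T p = s)).card

/-- The average replication number `e = rc/v` as a rational number. -/
def avgRepl (r c v : ℕ) : ℚ := ((r : ℚ) * (c : ℚ)) / (v : ℚ)

/-- A design is equireplicate if `e = rc/v` is an integer and every symbol has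
replication number `e`. -/
def IsEquireplicate {r c v : ℕ} (T : Fin r × Fin c → Fin v) : Prop :=
  (avgRepl r c v).den = 1 ∧ ∀ s : Fin v, (replNum T s : ℚ) = avgRepl r c v

/-- A design is near equireplicate if `e = rc/v` is not an integer and every symbol
has replication number `⌊e⌋` or `⌈e⌉`. -/
def IsNearEquireplicate {r c v : ℕ} (T : Fin r × Fin c → Fin v) : Prop :=
  (avgRepl r c v).den ≠ 1 ∧
  ∀ s : Fin v, (replNum T s : ℤ) = ⌊avgRepl r c v⌋ ∨ (replNum T s : ℤ) = ⌈avgRepl r c v⌉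

/-- The set of symbols occurring in row `i`. -/
def rowSet {r c v : ℕ} (T : Fin r × Fin c → Fin v) (i : Fin r) : Finset (Fin v) :=
  Finset.univ.image (fun j : Fin c => T (i, j))

/-- The set of symbols occurring in column `j`. -/
def colSet {r c v : ℕ} (T : Fin r × Fin c → Fin v) (j : Fin c) : Finset (Fin v) :=
  Finset.univ.image (fun i : Fin r => T (i, j))

/-- Average row-column intersection size `λ_rc`. -/
def lamRC {r c v : ℕ} (T : Fin r × Fin c → Fin v) : ℚ :=
  (∑ i : Fin r, ∑ j : Fin c, ((rowSet T i ∩ colSet T j).card : ℚ)) / ((r : ℚ) * (c : ℚ))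

/-- Average row-row intersection size `λ_rr`. -/
def lamRR {r c v : ℕ} (T : Fin r × Fin c → Fin v) : ℚ :=
  (∑ p ∈ Finset.univ.filter (fun p : Fin r × Fin r => p.1 < p.2),
      ((rowSet T p.1 ∩ rowSet T p.2).card : ℚ)) / ((r : ℚ) * ((r : ℚ) - 1) / 2)

/-- Average column-column intersection size `λ_cc`. -/
def lamCC {r c v : ℕ} (T : Fin r × Fin c → Fin v) : ℚ :=
  (∑ p ∈ Finset.univ.filter (fun p : Fin c × Fin c => p.1 < p.2),
      ((colSet T p.1 ∩ colSet T p.2).card : ℚ)) / ((c : ℚ) * ((c : ℚ) - 1) / 2)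

/-- An `(r × c, v)`-near triple array. -/
def IsNearTripleArray {r c v : ℕ} (T : Fin r × Fin c → Fin v) : Prop :=
  IsBinaryDesign T ∧ (IsEquireplicate T ∨ IsNearEquireplicate T) ∧
  (∀ (i : Fin r) (j : Fin c),
    ((rowSet T i ∩ colSet T j).card : ℤ) = ⌊lamRC T⌋ ∨
    ((rowSet T i ∩ colSet T j).card : ℤ) = ⌈lamRC T⌉) ∧
  (∀ i j : Fin r, i ≠ j →
    ((rowSet T i ∩ rowSet T j).card : ℤ) = ⌊lamRR T⌋ ∨
    ((rowSet T i ∩ rowSet T j).card : ℤ) = ⌈lamRR T⌉) ∧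
  (∀ i j : Fin c, i ≠ j →
    ((colSet T i ∩ colSet T j).card : ℤ) = ⌊lamCC T⌋ ∨
    ((colSet T i ∩ colSet T j).card : ℤ) = ⌈lamCC T⌉)


section Aux

variable {r c v : ℕ} (T : Fin r × Fin c → Fin v)

/-- number of rows containing symbol s -/
def rowCnt (s : Fin v) : ℕ := (Finset.univ.filter (fun i : Fin r => s ∈ rowSet T i)).card

/-- number of columns containing symbol s -/
def colCnt (s : Fin v) : ℕ := (Finset.univ.filter (fun j : Fin c => s ∈ colSet T j)).card

lemma card_rowSet (hbin : IsBinaryDesign T) (i : Fin r) : (rowSet T i).card = c := by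
  rw [rowSet, Finset.card_image_of_injective _ (fun j j' h => by
    by_contra hne; exact hbin.1 i j j' hne h), Finset.card_univ, Fintype.card_fin]

lemma card_colSet (hbin : IsBinaryDesign T) (j : Fin c) : (colSet T j).card = r := by
  rw [colSet, Finset.card_image_of_injective _ (fun i i' h => by
    by_contra hne; exact hbin.2 j i i' hne h), Finset.card_univ, Fintype.card_fin]

lemma rowCnt_eq_replNum (hbin : IsBinaryDesign T) (s : Fin v) :
    rowCnt T s = replNum T s := by
  classical
  have h1 : replNum T s = ∑ i : Fin r,
      (Finset.univ.filter (fun j : Fin c => T (i, j) = s)).card := by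
    rw [replNum, Finset.card_filter, Fintype.sum_prod_type]
    exact Finset.sum_congr rfl fun i _ => (Finset.card_filter _ _).symm
  have h2 : ∀ i : Fin r, (Finset.univ.filter (fun j : Fin c => T (i, j) = s)).card
      = if s ∈ rowSet T i then 1 else 0 := by
    intro i
    split_ifs with hmem
    · obtain ⟨j, _, hj⟩ := Finset.mem_image.mp hmem
      rw [show Finset.univ.filter (fun j' : Fin c => T (i, j') = s) = {j} from ?_,
        Finset.card_singleton]
      ext j'
      simp only [Finset.mem_filter, Finset.mem_univ, true_and, Finset.mem_singleton]
      constructor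
      · intro hj'
        by_contra hne
        exact hbin.1 i j' j hne (Eq.trans hj' hj.symm)
      · rintro rfl; exact hj
    · rw [Finset.card_eq_zero, Finset.filter_eq_empty_iff]
      intro j _ hj
      exact hmem (Finset.mem_image.mpr ⟨j, Finset.mem_univ j, hj⟩)
  rw [h1, rowCnt, Finset.card_filter]
  exact (Finset.sum_congr rfl fun i _ => (h2 i)).symm

lemma colCnt_eq_replNum (hbin : IsBinaryDesign T) (s : Fin v) :
    colCnt T s = replNum T s := by
  classical
  have h1 : replNum T s = ∑ j : Fin c,
      (Finset.univ.filter (fun i : Fin r => T (i, j) = s)).card := by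
    rw [replNum, Finset.card_filter, Fintype.sum_prod_type_right]
    exact Finset.sum_congr rfl fun j _ => (Finset.card_filter _ _).symm
  have h2 : ∀ j : Fin c, (Finset.univ.filter (fun i : Fin r => T (i, j) = s)).card
      = if s ∈ colSet T j then 1 else 0 := by
    intro j
    split_ifs with hmem
    · obtain ⟨i, _, hi⟩ := Finset.mem_image.mp hmem
      rw [show Finset.univ.filter (fun i' : Fin r => T (i', j) = s) = {i} from ?_,
        Finset.card_singleton]
      ext i'
      simp only [Finset.mem_filter, Finset.mem_univ, true_and, Finset.mem_singleton]
      constructor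
      · intro hi'
        by_contra hne
        exact hbin.2 j i' i hne (Eq.trans hi' hi.symm)
      · rintro rfl; exact hi
    · rw [Finset.card_eq_zero, Finset.filter_eq_empty_iff]
      intro i _ hi
      exact hmem (Finset.mem_image.mpr ⟨i, Finset.mem_univ i, hi⟩)
  rw [h1, colCnt, Finset.card_filter]
  exact (Finset.sum_congr rfl fun j _ => (h2 j)).symm

lemma card_inter_as_sum {α : Type*} [Fintype α] [DecidableEq α] (A B : Finset α) :
    (A ∩ B).card = ∑ s : α, (if s ∈ A then 1 else 0) * (if s ∈ B then 1 else 0) := by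
  classical
  rw [show A ∩ B = Finset.univ.filter (fun s => s ∈ A ∧ s ∈ B) by ext s; simp,
    Finset.card_filter]
  refine Finset.sum_congr rfl fun s _ => ?_
  split_ifs <;> simp_all

lemma sum_inter_rc : ∑ i : Fin r, ∑ j : Fin c, (rowSet T i ∩ colSet T j).card
    = ∑ s : Fin v, rowCnt T s * colCnt T s := by
  classical
  simp_rw [card_inter_as_sum]
  have h1 : ∀ i : Fin r, (∑ j : Fin c, ∑ s : Fin v,
      (if s ∈ rowSet T i then 1 else 0) * (if s ∈ colSet T j then 1 else 0))
      = ∑ s : Fin v, ∑ j : Fin c,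
      (if s ∈ rowSet T i then 1 else 0) * (if s ∈ colSet T j then 1 else 0) :=
    fun i => Finset.sum_comm
  simp_rw [h1]
  rw [Finset.sum_comm]
  refine Finset.sum_congr rfl fun s _ => ?_
  rw [rowCnt, colCnt, Finset.card_filter, Finset.card_filter, Finset.sum_mul_sum]


lemma sum_inter_sq {n : ℕ} (S : Fin n → Finset (Fin v)) :
    ∑ i : Fin n, ∑ j : Fin n, (S i ∩ S j).card
    = ∑ s : Fin v, (Finset.univ.filter (fun i : Fin n => s ∈ S i)).card ^ 2 := by
  classical
  simp_rw [card_inter_as_sum]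
  have h1 : ∀ i : Fin n, (∑ j : Fin n, ∑ s : Fin v,
      (if s ∈ S i then 1 else 0) * (if s ∈ S j then 1 else 0))
      = ∑ s : Fin v, ∑ j : Fin n,
      (if s ∈ S i then 1 else 0) * (if s ∈ S j then 1 else 0) :=
    fun i => Finset.sum_comm
  simp_rw [h1]
  rw [Finset.sum_comm]
  refine Finset.sum_congr rfl fun s _ => ?_
  rw [Finset.card_filter, sq, Finset.sum_mul_sum]

lemma two_mul_sum_lt {n : ℕ} (X : Fin n → Fin n → ℕ) (hsym : ∀ i j, X i j = X j i) :
    2 * (∑ p ∈ Finset.univ.filter (fun p : Fin n × Fin n => p.1 < p.2), X p.1 p.2)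
      + ∑ i : Fin n, X i i = ∑ i : Fin n, ∑ j : Fin n, X i j := by
  classical
  have hsplit := Finset.sum_filter_add_sum_filter_not Finset.univ
    (fun p : Fin n × Fin n => p.1 < p.2) (fun p => X p.1 p.2)
  have hge : Finset.univ.filter (fun p : Fin n × Fin n => ¬ p.1 < p.2)
      = Finset.univ.filter (fun p : Fin n × Fin n => p.2 < p.1) ∪
        Finset.univ.filter (fun p : Fin n × Fin n => p.1 = p.2) := by
    ext p
    simp only [Finset.mem_filter, Finset.mem_univ, true_and, Finset.mem_union]
    omega
  have hdisj : Disjoint (Finset.univ.filter (fun p : Fin n × Fin n => p.2 < p.1))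
      (Finset.univ.filter (fun p : Fin n × Fin n => p.1 = p.2)) := by
    rw [Finset.disjoint_left]
    intro p hp hp'
    simp only [Finset.mem_filter, Finset.mem_univ, true_and] at hp hp'
    omega
  have hswap : ∑ p ∈ Finset.univ.filter (fun p : Fin n × Fin n => p.2 < p.1), X p.1 p.2
      = ∑ p ∈ Finset.univ.filter (fun p : Fin n × Fin n => p.1 < p.2), X p.1 p.2 := by
    apply Finset.sum_nbij' (fun p => (p.2, p.1)) (fun p => (p.2, p.1)) <;>
      simp +contextual [hsym]
  have hdiag : ∑ p ∈ Finset.univ.filter (fun p : Fin n × Fin n => p.1 = p.2), X p.1 p.2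
      = ∑ i : Fin n, X i i := by
    apply Finset.sum_nbij' (fun p => p.1) (fun i => (i, i)) <;>
      simp +contextual
  rw [← Fintype.sum_prod_type', ← hsplit, hge, Finset.sum_union hdisj, hswap, hdiag]
  ring


lemma sum_replNum : ∑ s : Fin v, replNum T s = r * c := by
  classical
  have h := Finset.card_eq_sum_card_fiberwise
    (f := T) (s := (Finset.univ : Finset (Fin r × Fin c))) (t := Finset.univ)
    (fun x _ => Finset.mem_univ _)
  simp only [Finset.card_univ, Fintype.card_prod, Fintype.card_fin] at h
  rw [h]
  rfl

end Aux

/-- For a binary (near) equireplicate design: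
(a) `λ_rc = ⌊e⌋ + ⌈e⌉ − ⌊e⌋⌈e⌉/e`; (b) `⌊λ_rc⌋ = ⌊e⌋` and `⌈λ_rc⌉ = ⌈e⌉`;
(c) `λ_rr = c(λ_rc − 1)/(r − 1)`; (d) `λ_cc = r(λ_rc − 1)/(c − 1)`. -/
theorem lambda_of_nearEquireplicate {r c v : ℕ} (hr : 2 ≤ r) (hc : 2 ≤ c)
    (hv1 : max r c ≤ v) (hv2 : v ≤ r * c)
    (T : Fin r × Fin c → Fin v) (hbin : IsBinaryDesign T)
    (heq : IsEquireplicate T ∨ IsNearEquireplicate T) :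
    lamRC T = (⌊avgRepl r c v⌋ : ℚ) + (⌈avgRepl r c v⌉ : ℚ)
        - (⌊avgRepl r c v⌋ : ℚ) * (⌈avgRepl r c v⌉ : ℚ) / avgRepl r c v ∧
    (⌊lamRC T⌋ = ⌊avgRepl r c v⌋ ∧ ⌈lamRC T⌉ = ⌈avgRepl r c v⌉) ∧
    lamRR T = (c : ℚ) * (lamRC T - 1) / ((r : ℚ) - 1) ∧
    lamCC T = (r : ℚ) * (lamRC T - 1) / ((c : ℚ) - 1) := by
    classical
  have hvr : r ≤ v := le_trans (le_max_left r c) hv1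
  have hvc : c ≤ v := le_trans (le_max_right r c) hv1
  have hv0 : (0:ℚ) < v := by exact_mod_cast Nat.lt_of_lt_of_le (by omega) hvr
  have hr0 : (0:ℚ) < r := by exact_mod_cast Nat.lt_of_lt_of_le (by omega) hr
  have hc0 : (0:ℚ) < c := by exact_mod_cast Nat.lt_of_lt_of_le (by omega) hc
  set e := avgRepl r c v with he
  set F : ℚ := (⌊e⌋ : ℚ) with hF
  set G : ℚ := (⌈e⌉ : ℚ) with hG
  have hev : e * v = r * c := by
    rw [he, avgRepl, div_mul_cancel₀ _ (ne_of_gt hv0)]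
  have he1 : 1 ≤ e := by
    rw [he, avgRepl, le_div_iff₀ hv0, one_mul]
    exact_mod_cast hv2
  have he0 : (0:ℚ) < e := lt_of_lt_of_le one_pos he1
  -- root property
  have hroot : ∀ s : Fin v, ((replNum T s : ℚ) - F) * ((replNum T s : ℚ) - G) = 0 := by
    rcases heq with ⟨hden, hrep⟩ | ⟨hden, hrep⟩
    · intro s
      have hnum : ((e.num : ℚ)) = e := by
        conv_rhs => rw [← Rat.num_div_den e]
        rw [hden]; simp
      have hFe : F = e := by rw [hF, ← hnum, Int.floor_intCast, hnum]
      rw [hrep s, ← he, hFe, sub_self, zero_mul]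
    · intro s
      rcases hrep s with h | h
      · have : (replNum T s : ℚ) = F := by rw [hF, ← h]; push_cast; ring
        rw [this, sub_self, zero_mul]
      · have : (replNum T s : ℚ) = G := by rw [hG, ← h]; push_cast; ring
        rw [this, sub_self, mul_zero]
  have hsumK : ∑ s : Fin v, (replNum T s : ℚ) = (r:ℚ) * c := by
    rw [← Nat.cast_sum]
    exact_mod_cast congrArg (Nat.cast : ℕ → ℚ) (sum_replNum T)
  have hsumsq : ∑ s : Fin v, (replNum T s : ℚ)^2 = (F+G)*((r:ℚ)*c) - (v:ℚ)*(F*G) := by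
    have h0 : ∑ s : Fin v, ((replNum T s : ℚ) - F) * ((replNum T s : ℚ) - G) = 0 :=
      Finset.sum_eq_zero fun s _ => hroot s
    have hexp : ∑ s : Fin v, ((replNum T s : ℚ) - F) * ((replNum T s : ℚ) - G)
        = ∑ s : Fin v, (replNum T s : ℚ)^2 - (F+G) * ∑ s : Fin v, (replNum T s : ℚ)
          + (v:ℚ) * (F*G) := by
      rw [Finset.sum_congr rfl (fun s _ => by ring :
        ∀ s ∈ Finset.univ, ((replNum T s : ℚ) - F) * ((replNum T s : ℚ) - G)
          = (replNum T s : ℚ)^2 - (F+G) * (replNum T s : ℚ) + F*G)]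
      rw [Finset.sum_add_distrib, Finset.sum_sub_distrib, ← Finset.mul_sum,
        Finset.sum_const, Finset.card_univ, Fintype.card_fin, nsmul_eq_mul]
    rw [hexp, hsumK] at h0
    linarith
  -- lamRC basic identity
  have hRC : lamRC T * ((r:ℚ)*c) = ∑ s : Fin v, (replNum T s : ℚ)^2 := by
    rw [lamRC, div_mul_cancel₀ _ (by positivity)]
    have h := sum_inter_rc T
    simp_rw [rowCnt_eq_replNum T hbin, colCnt_eq_replNum T hbin, ← sq] at h
    exact_mod_cast h
  have hRCval : lamRC T * ((r:ℚ)*c) = (F+G)*((r:ℚ)*c) - (v:ℚ)*(F*G) := by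
    rw [hRC, hsumsq]
  -- (a)
  have ha : lamRC T = F + G - F * G / e := by
    have hrc0 : (r:ℚ)*c ≠ 0 := by positivity
    have h3 : F * G / e * ((r:ℚ)*c) = (v:ℚ) * (F * G) := by
      rw [← hev]
      field_simp
    apply mul_right_cancel₀ hrc0
    rw [hRCval, sub_mul, h3, add_mul]
  refine ⟨ha, ?_, ?_, ?_⟩
  · -- (b) floor and ceil
    rcases heq with ⟨hden, hrep⟩ | ⟨hden, hrep⟩
    · have hnum : ((e.num : ℚ)) = e := by
        conv_rhs => rw [← Rat.num_div_den e]
        rw [hden]; simp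
      have hFe : F = e := by rw [hF, ← hnum, Int.floor_intCast, hnum]
      have hGe : G = e := by rw [hG, ← hnum, Int.ceil_intCast, hnum]
      have : lamRC T = e := by
        rw [ha, hFe, hGe, mul_div_assoc, div_self (ne_of_gt he0)]; ring
      exact ⟨by rw [this], by rw [this]⟩
    · have hFe : F < e := by
        rcases lt_or_eq_of_le (Int.floor_le e) with h | h
        · exact h
        · exfalso; apply hden; show e.den = 1; rw [← h]; exact Rat.den_intCast _
      have heG : e < G := by
        rcases lt_or_eq_of_le (Int.le_ceil e) with h | h
        · exact h
        · exfalso; apply hden; show e.den = 1; rw [h]; exact Rat.den_intCast _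
      have hGF : (⌈e⌉ : ℤ) = ⌊e⌋ + 1 := by
        have h1 : ⌊e⌋ < ⌈e⌉ := by
          have h1' := lt_trans hFe heG
          rw [hF, hG] at h1'
          exact_mod_cast h1'
        have h2 := Int.ceil_le_floor_add_one e
        omega
      have hGFq : G = F + 1 := by rw [hG, hF, hGF]; push_cast; ring
      have hF1 : (1:ℚ) ≤ F := by
        rw [hF]
        exact_mod_cast Int.le_floor.mpr (by exact_mod_cast he1)
      have hlow : F < lamRC T := by
        rw [ha]
        have : F * G / e < G := by
          rw [div_lt_iff₀ he0]
          nlinarith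
        linarith
      have hhigh : lamRC T < G := by
        rw [ha]
        have : F < F * G / e := by
          rw [lt_div_iff₀ he0]
          nlinarith
        linarith
      constructor
      · rw [Int.floor_eq_iff]
        refine ⟨le_of_lt hlow, ?_⟩
        push_cast
        rw [← hF]
        linarith [hGFq ▸ hhigh]
      · rw [Int.ceil_eq_iff]
        refine ⟨?_, le_of_lt hhigh⟩
        push_cast
        rw [← hG, hGFq]
        linarith [hlow]
  · -- (c)
    have hr1 : (1:ℚ) < r := by exact_mod_cast Nat.lt_of_lt_of_le one_lt_two hr
    have hkey := two_mul_sum_lt (fun i j => (rowSet T i ∩ rowSet T j).card)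
      (fun i j => congrArg Finset.card (Finset.inter_comm _ _))
    rw [sum_inter_sq (v := v) (rowSet T)] at hkey
    simp_rw [show ∀ s : Fin v,
        (Finset.univ.filter (fun i : Fin r => s ∈ rowSet T i)).card = replNum T s from
      fun s => rowCnt_eq_replNum T hbin s] at hkey
    have hdiag : ∑ i : Fin r, (rowSet T i ∩ rowSet T i).card = r * c := by
      simp only [Finset.inter_self]
      rw [Finset.sum_congr rfl fun i _ => card_rowSet T hbin i, Finset.sum_const,
        Finset.card_univ, Fintype.card_fin, smul_eq_mul]
    rw [hdiag] at hkey
    have hkq : 2 * ((∑ p ∈ Finset.univ.filter (fun p : Fin r × Fin r => p.1 < p.2),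
        (rowSet T p.1 ∩ rowSet T p.2).card : ℕ) : ℚ) + (r:ℚ)*c
        = ∑ s : Fin v, (replNum T s : ℚ)^2 := by exact_mod_cast hkey
    rw [← hRC] at hkq
    rw [lamRR, show (∑ p ∈ Finset.univ.filter (fun p : Fin r × Fin r => p.1 < p.2),
        ((rowSet T p.1 ∩ rowSet T p.2).card : ℚ))
        = ((∑ p ∈ Finset.univ.filter (fun p : Fin r × Fin r => p.1 < p.2),
        (rowSet T p.1 ∩ rowSet T p.2).card : ℕ) : ℚ) from by push_cast; rfl]
    have hd1 : (r:ℚ) * ((r:ℚ) - 1) / 2 ≠ 0 := ne_of_gt (by nlinarith)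
    have hd2 : (r:ℚ) - 1 ≠ 0 := by linarith
    rw [div_eq_div_iff hd1 hd2]
    linear_combination (((r:ℚ) - 1) / 2) * hkq
  · -- (d)
    have hc1 : (1:ℚ) < c := by exact_mod_cast Nat.lt_of_lt_of_le one_lt_two hc
    have hkey := two_mul_sum_lt (fun i j => (colSet T i ∩ colSet T j).card)
      (fun i j => congrArg Finset.card (Finset.inter_comm _ _))
    rw [sum_inter_sq (v := v) (colSet T)] at hkey
    simp_rw [show ∀ s : Fin v,
        (Finset.univ.filter (fun j : Fin c => s ∈ colSet T j)).card = replNum T s from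
      fun s => colCnt_eq_replNum T hbin s] at hkey
    have hdiag : ∑ j : Fin c, (colSet T j ∩ colSet T j).card = c * r := by
      simp only [Finset.inter_self]
      rw [Finset.sum_congr rfl fun j _ => card_colSet T hbin j, Finset.sum_const,
        Finset.card_univ, Fintype.card_fin, smul_eq_mul]
    rw [hdiag] at hkey
    have hkq : 2 * ((∑ p ∈ Finset.univ.filter (fun p : Fin c × Fin c => p.1 < p.2),
        (colSet T p.1 ∩ colSet T p.2).card : ℕ) : ℚ) + (c:ℚ)*r
        = ∑ s : Fin v, (replNum T s : ℚ)^2 := by exact_mod_cast hkey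
    rw [← hRC] at hkq
    rw [lamCC, show (∑ p ∈ Finset.univ.filter (fun p : Fin c × Fin c => p.1 < p.2),
        ((colSet T p.1 ∩ colSet T p.2).card : ℚ))
        = ((∑ p ∈ Finset.univ.filter (fun p : Fin c × Fin c => p.1 < p.2),
        (colSet T p.1 ∩ colSet T p.2).card : ℕ) : ℚ) from by push_cast; rfl]
    have hd1 : (c:ℚ) * ((c:ℚ) - 1) / 2 ≠ 0 := ne_of_gt (by nlinarith)
    have hd2 : (c:ℚ) - 1 ≠ 0 := by linarith
    rw [div_eq_div_iff hd1 hd2]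
    linear_combination (((c:ℚ) - 1) / 2) * hkq
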